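/- arXiv:1903.11628 — 4 statements merged into one kernel-verified Lean document; each statement's English description precedes it below -/
import Mathlib

section
/- Let l > 0 and M > 0, and define p(r) = r^3 - l^2 r - 2M l^2. Then p has exactly one root in the interval (0, ∞), and this root r_+ satisfies r_+ > l. -/
/-! A positive root of `r ^ 3 - c * r - d` with `d > 0` satisfies `r * (r ^ 2 - c) = d > 0`, hence
`r ^ 2 > c`; with `c = l ^ 2` this gives `r > l`. It also makes the second factor of
`(r₁ - r₂) * (r₁ ^ 2 + r₁ * r₂ + r₂ ^ 2 - c)` positive, so two positive roots coincide.
Existence is the intermediate value theorem, the cubic being `-d < 0` at `0`. -/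

section DepressedCubic

variable {c d : ℝ}

theorem lt_sq_of_cubic_eq_zero (hd : 0 < d) {r : ℝ} (hr : 0 < r)
    (h : r ^ 3 - c * r - d = 0) : c < r ^ 2 := by
  have hfactor : r * (r ^ 2 - c) = d := by linear_combination h
  have hprod : 0 < r * (r ^ 2 - c) := hfactor ▸ hd
  linarith [(pos_iff_pos_of_mul_pos hprod).1 hr]

theorem cubic_pos_root_unique (hd : 0 < d) {r₁ r₂ : ℝ} (hr₁ : 0 < r₁) (hr₂ : 0 < r₂)
    (h₁ : r₁ ^ 3 - c * r₁ - d = 0) (h₂ : r₂ ^ 3 - c * r₂ - d = 0) : r₁ = r₂ := by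
  have hfactor : (r₁ - r₂) * (r₁ ^ 2 + r₁ * r₂ + r₂ ^ 2 - c) = 0 := by
    linear_combination h₁ - h₂
  have hc := lt_sq_of_cubic_eq_zero hd hr₁ h₁
  have hpos : 0 < r₁ ^ 2 + r₁ * r₂ + r₂ ^ 2 - c := by nlinarith [mul_pos hr₁ hr₂]
  exact sub_eq_zero.1 ((mul_eq_zero.1 hfactor).resolve_right hpos.ne')

theorem exists_cubic_pos_root (hd : 0 < d) : ∃ r, 0 < r ∧ r ^ 3 - c * r - d = 0 := by
  set B := 1 + |c| + d
  have hB : 1 ≤ B := by linarith [abs_nonneg c]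
  -- `B ^ 3 ≥ B ^ 2 = B * (1 + |c| + d) > |c| * B + d ≥ c * B + d`
  have hpB : 0 < B ^ 3 - c * B - d := by
    nlinarith [le_abs_self c, mul_le_mul_of_nonneg_left hB (by positivity : 0 ≤ B ^ 2)]
  have hcont : ContinuousOn (fun r : ℝ => r ^ 3 - c * r - d) (Set.Icc 0 B) := by fun_prop
  obtain ⟨r, ⟨hr, -⟩, hroot⟩ := intermediate_value_Ioo (by linarith) hcont
    (show (0 : ℝ) ∈ Set.Ioo (0 ^ 3 - c * 0 - d) (B ^ 3 - c * B - d) from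
      ⟨by simpa using hd, hpB⟩)
  exact ⟨r, hr, hroot⟩

theorem existsUnique_cubic_pos_root (hd : 0 < d) : ∃! r, 0 < r ∧ r ^ 3 - c * r - d = 0 :=
  let ⟨r, hr, hroot⟩ := exists_cubic_pos_root hd
  ⟨r, ⟨hr, hroot⟩, fun _ ⟨hs, hsroot⟩ => cubic_pos_root_unique hd hs hr hsroot hroot⟩

end DepressedCubic

/-- For `l > 0`, `M > 0`, the cubic `p(r) = r^3 - l^2 r - 2 M l^2` has exactly one
root in `(0, ∞)`, and this root is `> l`. -/
theorem unique_positive_root (l M : ℝ) (hl : 0 < l) (hM : 0 < M)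
    (p : ℝ → ℝ) (hp : ∀ r, p r = r ^ 3 - l ^ 2 * r - 2 * M * l ^ 2) :
    (∃! r : ℝ, 0 < r ∧ p r = 0) ∧ ∀ r : ℝ, 0 < r → p r = 0 → l < r := by
  obtain rfl : p = fun r => r ^ 3 - l ^ 2 * r - 2 * M * l ^ 2 := funext hp
  have hd : 0 < 2 * M * l ^ 2 := by positivity
  refine ⟨existsUnique_cubic_pos_root hd, fun r hr hroot => ?_⟩
  exact lt_of_pow_lt_pow_left₀ 2 hr.le (lt_sq_of_cubic_eq_zero hd hr hroot)
end

section
/- Let l > 0 and M with -l/(3√3) ≤ M ≤ 0, and let r_+ be the largest positive root of p(r) = r^3 - l^2 r - 2M l^2. Then -3M ≤ r_+. (Hence there are no constant-r null geodesics in the black hole exterior, since such geodesics would require r = -3M > r_+.) -/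
/-!
With `a = -3M ≥ 0` one has `p(a) = M (l² - 27 M²)`, and the lower bound on `M` says exactly
`27 M² ≤ l²`, so `p(a) ≤ 0`. Since `M ≤ 0`, `p ≥ 0` on `[l, ∞)`, so by the intermediate value
theorem `p` has a root in `[a, max a l]`; when `M < 0` that root is positive, hence at most `r₊`.
-/

def horizonPoly (l M r : ℝ) : ℝ := r ^ 3 - l ^ 2 * r - 2 * M * l ^ 2

lemma sq_mul_sq_le_sq_of_neg_div_le {c l M : ℝ} (hc : 0 < c) (h : -l / c ≤ M) (hM : M ≤ 0) :
    c ^ 2 * M ^ 2 ≤ l ^ 2 := by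
  rw [div_le_iff₀ hc] at h
  rw [← mul_pow]
  exact sq_le_sq' (by linarith) (by nlinarith)

lemma horizonPoly_neg_three_mul_nonpos {l M : ℝ} (hM : M ≤ 0) (h : 27 * M ^ 2 ≤ l ^ 2) :
    horizonPoly l M (-3 * M) ≤ 0 := by
  have hfactor : horizonPoly l M (-3 * M) = M * (l ^ 2 - 27 * M ^ 2) := by
    unfold horizonPoly; ring
  rw [hfactor]
  exact mul_nonpos_of_nonpos_of_nonneg hM (by linarith)

lemma horizonPoly_nonneg_of_le {l M r : ℝ} (hM : M ≤ 0) (hl : 0 ≤ l) (hr : l ≤ r) :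
    0 ≤ horizonPoly l M r := by
  have hfactor : horizonPoly l M r = r * (r - l) * (r + l) - 2 * M * l ^ 2 := by
    unfold horizonPoly; ring
  rw [hfactor]
  have : 0 ≤ r * (r - l) * (r + l) := by
    apply mul_nonneg (mul_nonneg _ _) <;> linarith
  nlinarith [sq_nonneg l]

lemma exists_horizonPoly_root_ge {l M a : ℝ} (hM : M ≤ 0) (hl : 0 ≤ l)
    (ha : horizonPoly l M a ≤ 0) : ∃ r, a ≤ r ∧ horizonPoly l M r = 0 := by
  have hcont : ContinuousOn (horizonPoly l M) (Set.Icc a (max a l)) := by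
    unfold horizonPoly; fun_prop
  have hb : 0 ≤ horizonPoly l M (max a l) := horizonPoly_nonneg_of_le hM hl (le_max_right a l)
  obtain ⟨r, hr, hroot⟩ := intermediate_value_Icc (le_max_left a l) hcont ⟨ha, hb⟩
  exact ⟨r, hr.1, hroot⟩

theorem no_constant_r_null_geodesics_general (l M rp : ℝ) (hl : 0 < l)
    (hMlow : -l / (3 * Real.sqrt 3) ≤ M) (hMhigh : M ≤ 0)
    (hrp : 0 < rp)
    (hlargest : ∀ r : ℝ, 0 < r → r ^ 3 - l ^ 2 * r - 2 * M * l ^ 2 = 0 → r ≤ rp) :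
    -3 * M ≤ rp := by
  rcases hMhigh.eq_or_lt with rfl | hMneg
  · linarith
  have hM2 : 27 * M ^ 2 ≤ l ^ 2 := by
    have h := sq_mul_sq_le_sq_of_neg_div_le (by positivity) hMlow hMhigh
    rw [mul_pow, Real.sq_sqrt (by norm_num)] at h
    linarith
  obtain ⟨r, har, hr⟩ :=
    exists_horizonPoly_root_ge hMhigh hl.le (horizonPoly_neg_three_mul_nonpos hMhigh hM2)
  exact har.trans (hlargest r (by linarith) hr)

/-- For `-l/(3√3) ≤ M ≤ 0`, the largest positive root `r_+` of
`p(r) = r^3 - l^2 r - 2 M l^2` satisfies `-3M ≤ r_+`. -/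
theorem no_constant_r_null_geodesics (l M rp : ℝ) (hl : 0 < l)
    (hMlow : -l / (3 * Real.sqrt 3) ≤ M) (hMhigh : M ≤ 0)
    (hrp : 0 < rp) (hroot : rp ^ 3 - l ^ 2 * rp - 2 * M * l ^ 2 = 0)
    (hlargest : ∀ r : ℝ, 0 < r → r ^ 3 - l ^ 2 * r - 2 * M * l ^ 2 = 0 → r ≤ rp) :
    -3 * M ≤ rp :=
  no_constant_r_null_geodesics_general l M rp hl hMlow hMhigh hrp hlargest
end

section
/- Let l > 0, M > 0, r_+ > l the positive root of r^3 - l^2 r - 2Ml^2, and f(r) = -1 - 2M/r + r^2/l^2. For constants E ≠ 0 and h with h^2/E^2 < l^2, the function r ↦ 1/(f(r)·√(1 - (h^2/E^2) f(r)/r^2)) is integrable on (r_0, ∞) for any r_0 > r_+. -/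
/-- For `h²/E² < l²`, the coordinate-time integrand
`1/(f(r)·√(1 - (h²/E²) f(r)/r²))` is integrable on `(r₀, ∞)` for any `r₀ > r_+`. -/
theorem outgoing_geodesic_finite_time (l M rp r0 h E : ℝ) (hl : 0 < l) (hM : 0 < M)
    (hrpl : l < rp) (hroot : rp ^ 3 - l ^ 2 * rp - 2 * M * l ^ 2 = 0)
    (hr0 : rp < r0) (hE : E ≠ 0) (hhE : h ^ 2 < E ^ 2 * l ^ 2)
    (f : ℝ → ℝ) (hf : ∀ r, f r = -1 - 2 * M / r + r ^ 2 / l ^ 2) :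
    MeasureTheory.IntegrableOn
      (fun r => 1 / (f r * Real.sqrt (1 - h ^ 2 / E ^ 2 * (f r / r ^ 2))))
      (Set.Ioi r0) := by
  have hE2 : (0:ℝ) < E ^ 2 := lt_of_le_of_ne (sq_nonneg E) (Ne.symm (pow_ne_zero 2 hE))
  have hl2 : (0:ℝ) < l ^ 2 := by positivity
  have hr0pos : (0:ℝ) < r0 := lt_trans (lt_trans hl hrpl) hr0
  -- positivity of the cubic at r0
  have hPr0 : 0 < r0 ^ 3 - l ^ 2 * r0 - 2 * M * l ^ 2 := by
    nlinarith [mul_pos (sub_pos.mpr hr0)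
      (show (0:ℝ) < r0 ^ 2 + r0 * rp + rp ^ 2 - l ^ 2 by nlinarith)]
  set c0 : ℝ := 1 - h ^ 2 / (E ^ 2 * l ^ 2) with hc0def
  have hc0 : 0 < c0 := by
    have : h ^ 2 / (E ^ 2 * l ^ 2) < 1 := (div_lt_one (by positivity)).mpr hhE
    rw [hc0def]; linarith
  have hsc0 : 0 < Real.sqrt c0 := Real.sqrt_pos.mpr hc0
  set B : ℝ := (r0 ^ 3 - l ^ 2 * r0 - 2 * M * l ^ 2) / (r0 ^ 3 * l ^ 2) with hBdef
  have hB : 0 < B := div_pos hPr0 (by positivity)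
  set C : ℝ := 1 / (B * Real.sqrt c0) with hCdef
  have hC : 0 < C := by positivity
  have hg : MeasureTheory.IntegrableOn (fun r : ℝ => C * r ^ (-2:ℝ)) (Set.Ioi r0) :=
    (integrableOn_Ioi_rpow_of_lt (by norm_num) hr0pos).const_mul C
  apply MeasureTheory.Integrable.mono' hg
  · apply Measurable.aestronglyMeasurable
    have hfm : Measurable f := by
      have : f = fun r => -1 - 2 * M / r + r ^ 2 / l ^ 2 := funext hf
      rw [this]; fun_prop
    fun_prop
  · filter_upwards [MeasureTheory.ae_restrict_mem measurableSet_Ioi] with r hr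
    have hrr : r0 < r := hr
    have hrpos : 0 < r := lt_trans hr0pos hrr
    -- f r expressed as a single fraction
    have hfr : f r = (r ^ 3 - l ^ 2 * r - 2 * M * l ^ 2) / (r * l ^ 2) := by
      rw [hf]; field_simp; ring
    -- lower bound f r ≥ B r²
    have hfB : B * r ^ 2 ≤ f r := by
      rw [hfr, hBdef, div_mul_eq_mul_div, div_le_div_iff₀ (by positivity) (by positivity)]
      have h1 : r0 ^ 2 < r ^ 2 := by nlinarith
      have h2 : r0 ^ 3 < r ^ 3 := by nlinarith
      nlinarith [mul_pos (mul_pos (mul_pos hl2 hl2) (mul_pos hrpos hr0pos)) (sub_pos.mpr h1),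
        mul_pos (mul_pos (mul_pos hl2 hl2) hM) (sub_pos.mpr h2)]
    have hfpos : 0 < f r := lt_of_lt_of_le (by positivity) hfB
    -- upper bound f r / r² ≤ 1/l²
    have hfle : f r ≤ r ^ 2 / l ^ 2 := by
      rw [hf]
      have h2 : 0 < 2 * M / r := by positivity
      linarith
    have hfub : f r / r ^ 2 ≤ 1 / l ^ 2 := by
      have := (div_le_div_iff_of_pos_right (c := r ^ 2) (by positivity)).mpr hfle
      calc f r / r ^ 2 ≤ (r ^ 2 / l ^ 2) / r ^ 2 := this
        _ = 1 / l ^ 2 := by field_simp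
    -- the square-root argument is bounded below by c0
    have hS : c0 ≤ 1 - h ^ 2 / E ^ 2 * (f r / r ^ 2) := by
      have h1 : h ^ 2 / E ^ 2 * (f r / r ^ 2) ≤ h ^ 2 / E ^ 2 * (1 / l ^ 2) :=
        mul_le_mul_of_nonneg_left hfub (by positivity)
      have h2 : h ^ 2 / E ^ 2 * (1 / l ^ 2) = h ^ 2 / (E ^ 2 * l ^ 2) := by
        rw [div_mul_div_comm, mul_one]
      rw [hc0def]; linarith [h1.trans_eq h2]
    have hsq : Real.sqrt c0 ≤ Real.sqrt (1 - h ^ 2 / E ^ 2 * (f r / r ^ 2)) :=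
      Real.sqrt_le_sqrt hS
    have hsqpos : 0 < Real.sqrt (1 - h ^ 2 / E ^ 2 * (f r / r ^ 2)) :=
      lt_of_lt_of_le hsc0 hsq
    have hdenpos : 0 < f r * Real.sqrt (1 - h ^ 2 / E ^ 2 * (f r / r ^ 2)) :=
      mul_pos hfpos hsqpos
    have hden : B * r ^ 2 * Real.sqrt c0 ≤
        f r * Real.sqrt (1 - h ^ 2 / E ^ 2 * (f r / r ^ 2)) :=
      mul_le_mul hfB hsq hsc0.le hfpos.le
    have hbound : 1 / (f r * Real.sqrt (1 - h ^ 2 / E ^ 2 * (f r / r ^ 2)))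
        ≤ C * r ^ (-2:ℝ) := by
      have h1 : 1 / (f r * Real.sqrt (1 - h ^ 2 / E ^ 2 * (f r / r ^ 2)))
          ≤ 1 / (B * r ^ 2 * Real.sqrt c0) :=
        one_div_le_one_div_of_le (by positivity) hden
      have h2 : (1:ℝ) / (B * r ^ 2 * Real.sqrt c0) = C * r ^ (-2:ℝ) := by
        rw [hCdef, Real.rpow_neg hrpos.le]
        rw [show ((2:ℝ)) = ((2:ℕ):ℝ) by norm_num, Real.rpow_natCast]
        field_simp
      linarith [h1.trans_eq h2]
    rw [Real.norm_eq_abs, abs_of_pos (by positivity)]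
    exact hbound
end

section
/- Let l > 0, M > 0, r_+ the positive root of r^3 - l^2 r - 2Ml^2, and f(r) = -1 - 2M/r + r^2/l^2. If h^2/E^2 = l^2 (E ≠ 0), then the function r ↦ 1/(f(r)·√(1 - l^2 f(r)/r^2)) is asymptotic to (l/r)·(1 + o(1)) as r → ∞ and is not integrable on (r_0, ∞) for any r_0 > r_+. -/
open Filter Asymptotics

/-- In the critical case `h²/E² = l²`, the coordinate-time integrand is
asymptotically `l/r` as `r → ∞` and is not integrable on `(r₀, ∞)`. -/
theorem critical_geodesic_infinite_time (l M rp r0 : ℝ) (hl : 0 < l) (hM : 0 < M)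
    (hrpl : l < rp) (hroot : rp ^ 3 - l ^ 2 * rp - 2 * M * l ^ 2 = 0)
    (hr0 : rp < r0)
    (f : ℝ → ℝ) (hf : ∀ r, f r = -1 - 2 * M / r + r ^ 2 / l ^ 2) :
    (fun r => 1 / (f r * Real.sqrt (1 - l ^ 2 * f r / r ^ 2))) ~[atTop]
      (fun r => l / r) ∧
    ¬ MeasureTheory.IntegrableOn
        (fun r => 1 / (f r * Real.sqrt (1 - l ^ 2 * f r / r ^ 2)))
        (Set.Ioi r0) := by
  set u : ℝ → ℝ := fun r => 1 / (f r * Real.sqrt (1 - l ^ 2 * f r / r ^ 2)) with hu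
  set D : ℝ → ℝ := fun r => 1 - l ^ 2 / r ^ 2 - 2 * M * l ^ 2 / r ^ 3 with hDdef
  set G : ℝ → ℝ := fun r => 1 / (D r * Real.sqrt (1 + 2 * M / r)) with hGdef
  have hD : Tendsto D atTop (nhds 1) := by
    have h1 : Tendsto (fun r : ℝ => l ^ 2 / r ^ 2) atTop (nhds 0) :=
      tendsto_const_nhds.div_atTop (tendsto_pow_atTop two_ne_zero)
    have h2 : Tendsto (fun r : ℝ => 2 * M * l ^ 2 / r ^ 3) atTop (nhds 0) :=
      tendsto_const_nhds.div_atTop (tendsto_pow_atTop three_ne_zero)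
    have := ((tendsto_const_nhds : Tendsto (fun _ : ℝ => (1:ℝ)) atTop (nhds 1)).sub h1).sub h2
    simpa using this
  have hS : Tendsto (fun r : ℝ => Real.sqrt (1 + 2 * M / r)) atTop (nhds 1) := by
    have h1 : Tendsto (fun r : ℝ => 1 + 2 * M / r) atTop (nhds 1) := by
      have := ((tendsto_const_nhds : Tendsto (fun _ : ℝ => (1:ℝ)) atTop (nhds 1)).add
        ((tendsto_const_nhds : Tendsto (fun _ : ℝ => 2 * M) atTop (nhds (2 * M))).div_atTop tendsto_id))
      simpa using this
    have := h1.sqrt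
    simpa using this
  have hG : Tendsto G atTop (nhds 1) := by
    have := (tendsto_const_nhds : Tendsto (fun _ : ℝ => (1:ℝ)) atTop (nhds 1)).div (hD.mul hS) (by norm_num)
    rw [one_mul, div_one] at this
    exact this
  -- Eventually: r > 0, D r > 1/2, and the key algebraic identity
  have hev : ∀ᶠ r in atTop, u r / (l / r) = G r := by
    filter_upwards [eventually_gt_atTop (0 : ℝ), hD.eventually (eventually_gt_nhds (by norm_num : (1:ℝ)/2 < 1))] with r hr hDr
    have hrne : r ≠ 0 := ne_of_gt hr
    have hlne : l ≠ 0 := ne_of_gt hl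
    have hDrne : D r ≠ 0 := ne_of_gt (lt_trans (by norm_num : (0:ℝ) < 1/2) hDr)
    have hfr : f r = D r * r ^ 2 / l ^ 2 := by
      rw [hf]; simp only [hDdef]; field_simp; ring
    have harg : 1 - l ^ 2 * f r / r ^ 2 = (l / r) ^ 2 * (1 + 2 * M / r) := by
      rw [hf]; field_simp; ring
    have hsq : Real.sqrt (1 - l ^ 2 * f r / r ^ 2)
        = (l / r) * Real.sqrt (1 + 2 * M / r) := by
      rw [harg, Real.sqrt_mul (sq_nonneg _), Real.sqrt_sq (le_of_lt (div_pos hl hr))]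
    set s := Real.sqrt (1 + 2 * M / r) with hs
    have hur : u r = 1 / ((D r * r ^ 2 / l ^ 2) * (l / r * s)) := by
      simp only [hu]; rw [hsq, hfr]
    rw [hur]
    simp only [hGdef]
    rw [← hs, div_div]
    congr 1
    field_simp
  have hev' : (fun r => u r / (l / r)) =ᶠ[atTop] G := hev
  have hvne : ∀ᶠ r in atTop, l / r ≠ 0 := by
    filter_upwards [eventually_gt_atTop (0 : ℝ)] with r hr
    exact ne_of_gt (div_pos hl hr)
  have hRatio : Tendsto (fun r => u r / (l / r)) atTop (nhds 1) := hG.congr' hev'.symm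
  have hEquiv : u ~[atTop] (fun r => l / r) := by
    rw [isEquivalent_iff_tendsto_one hvne]
    exact hRatio
  refine ⟨hEquiv, ?_⟩
  intro hInt
  -- eventually u r ≥ (l/2) / r
  have hlow : ∀ᶠ r in atTop, l / 2 * r⁻¹ ≤ u r := by
    filter_upwards [eventually_gt_atTop (0 : ℝ),
      hRatio.eventually (eventually_gt_nhds (by norm_num : (1:ℝ)/2 < 1))] with r hr hrat
    have hlr : 0 < l / r := div_pos hl hr
    have : u r = (u r / (l / r)) * (l / r) := by field_simp
    rw [this]
    calc l / 2 * r⁻¹ = 1 / 2 * (l / r) := by field_simp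
    _ ≤ (u r / (l / r)) * (l / r) := by
        apply mul_le_mul_of_nonneg_right (le_of_lt hrat) (le_of_lt hlr)
  obtain ⟨R₁, hR₁⟩ := eventually_atTop.1 hlow
  set R := max R₁ r0 with hRdef
  have hr0pos : 0 < r0 := lt_trans (lt_trans hl hrpl) hr0
  have hRpos : 0 < R := lt_of_lt_of_le hr0pos (le_max_right _ _)
  have hIntR : MeasureTheory.IntegrableOn u (Set.Ioi R) := by
    exact hInt.mono_set (Set.Ioi_subset_Ioi (le_max_right _ _))
  have hInv : MeasureTheory.IntegrableOn (fun r : ℝ => l / 2 * r⁻¹) (Set.Ioi R) := by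
    refine MeasureTheory.Integrable.mono hIntR ((measurable_const.mul measurable_inv).aestronglyMeasurable) ?_
    rw [MeasureTheory.ae_restrict_iff' measurableSet_Ioi]
    filter_upwards with r hr
    have hr' : R₁ ≤ r := le_of_lt (lt_of_le_of_lt (le_max_left _ _) hr)
    have hle := hR₁ r hr'
    have hrpos : 0 < r := lt_trans hRpos hr
    have h0 : 0 ≤ l / 2 * r⁻¹ := by positivity
    rw [Real.norm_eq_abs, Real.norm_eq_abs, abs_of_nonneg h0]
    exact le_trans hle (le_abs_self _)
  have hInv' : MeasureTheory.IntegrableOn (fun r : ℝ => r⁻¹) (Set.Ioi R) := by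
    have hc : IsUnit (l / 2) := by
      exact isUnit_iff_ne_zero.2 (by positivity)
    exact (MeasureTheory.integrable_const_mul_iff hc (fun r : ℝ => r⁻¹)).1 hInv
  have : MeasureTheory.IntegrableOn (fun r : ℝ => r ^ (-1 : ℝ)) (Set.Ioi R) := by
    refine hInv'.congr_fun (fun x hx => ?_) measurableSet_Ioi
    rw [Real.rpow_neg_one]
  rw [integrableOn_Ioi_rpow_iff hRpos] at this
  linarith
end
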